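/- arXiv:1412.6016 — 3 statements merged into one kernel-verified Lean document; each statement's English description precedes it below -/
import Mathlib

section
/- Suppose a sequence s = s_0 s_1 … s_{n+⌈log₂ m⌉} ∈ {0,1}^{n+1+⌈log₂ m⌉} satisfies occ_root^G(s) = m. Then the boolean assignment defined by x_j := s_{j+⌈log₂ m⌉} for j = 1,…,n satisfies every clause c_1(x),…,c_m(x). -/
namespace GraphDB

/-- Vertices of the graph `G` produced by the SAT reduction.
`node k p` is the vertex of the binary tree at depth `k` and position `p`
(in heap-style ordering); in particular `node 0 0` is the root and, with
`d = ⌈log₂ m⌉`, the leaf `node d (i-1)` is the clause vertex `c_i`.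
`u i j` and `v i j` are the vertices `u_i^j` and `v_i^j` (with `i = 0`
giving `u_0^j`, `v_0^j`). -/
inductive Vtx : Type
  | node (k p : ℕ)
  | u (i j : ℕ)
  | v (i j : ℕ)
  deriving DecidableEq

/-- The edge relation of the graph `G` obtained from the SAT instance with
`n` variables `x_1, …, x_n` and `m` clauses `c_1, …, c_m`, where
`c i j = some true` means that the literal `x_j` occurs in clause `c_i`,
`c i j = some false` means that the literal `¬x_j` occurs in `c_i`, and
`c i j = none` means that the variable `x_j` does not occur in `c_i`. -/
def Edge (n m : ℕ) (c : ℕ → ℕ → Option Bool) : Vtx → Vtx → Prop := fun a b =>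
  match a, b with
  | .node k p, .node k' q =>
      k' = k + 1 ∧ k' ≤ Nat.clog 2 m ∧ (q = 2 * p ∨ q = 2 * p + 1) ∧
        q * 2 ^ (Nat.clog 2 m - k') < m
  | .node k p, .u i j => k = Nat.clog 2 m ∧ p < m ∧ i = p + 1 ∧ j = 1
  | .node k p, .v i j => k = Nat.clog 2 m ∧ p < m ∧ i = p + 1 ∧ j = 1
  | .u i j, .u i' j' =>
      j' = j + 1 ∧
        ((i = 0 ∧ i' = 0 ∧ 2 ≤ j ∧ j + 1 ≤ n) ∨
         (1 ≤ i ∧ i ≤ m ∧ i' = 0 ∧ 1 ≤ j ∧ j + 1 ≤ n ∧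
            (c i j = some true ∨ (j + 1 = n ∧ c i n = some true))) ∨
         (1 ≤ i ∧ i ≤ m ∧ i' = i ∧ 1 ≤ j ∧ j + 2 ≤ n ∧ c i j ≠ some true))
  | .u i j, .v i' j' =>
      j' = j + 1 ∧
        ((i = 0 ∧ i' = 0 ∧ 2 ≤ j ∧ j + 1 ≤ n) ∨
         (1 ≤ i ∧ i ≤ m ∧ i' = 0 ∧ 1 ≤ j ∧ j + 1 ≤ n ∧
            (c i j = some true ∨ (j + 1 = n ∧ c i n = some false))) ∨
         (1 ≤ i ∧ i ≤ m ∧ i' = i ∧ 1 ≤ j ∧ j + 2 ≤ n ∧ c i j ≠ some true))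
  | .v i j, .u i' j' =>
      j' = j + 1 ∧
        ((i = 0 ∧ i' = 0 ∧ 2 ≤ j ∧ j + 1 ≤ n) ∨
         (1 ≤ i ∧ i ≤ m ∧ i' = 0 ∧ 1 ≤ j ∧ j + 1 ≤ n ∧
            (c i j = some false ∨ (j + 1 = n ∧ c i n = some true))) ∨
         (1 ≤ i ∧ i ≤ m ∧ i' = i ∧ 1 ≤ j ∧ j + 2 ≤ n ∧ c i j ≠ some false))
  | .v i j, .v i' j' =>
      j' = j + 1 ∧
        ((i = 0 ∧ i' = 0 ∧ 2 ≤ j ∧ j + 1 ≤ n) ∨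
         (1 ≤ i ∧ i ≤ m ∧ i' = 0 ∧ 1 ≤ j ∧ j + 1 ≤ n ∧
            (c i j = some false ∨ (j + 1 = n ∧ c i n = some false))) ∨
         (1 ≤ i ∧ i ≤ m ∧ i' = i ∧ 1 ≤ j ∧ j + 2 ≤ n ∧ c i j ≠ some false))
  | _, _ => False

/-- The vertex labeling `ℓ` of `G`: the vertices `v_i^j` are labeled `0`
(`false`), all other vertices are labeled `1` (`true`). -/
def lab : Vtx → Bool
  | .v _ _ => false
  | _ => true

/-- The starting vertex `root` of `G`. -/
def root : Vtx := .node 0 0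

/-- `occG n m c a t` is `occ_a^G(t)`: the number of walks `w_1 w_2 … w_k`
in `G` with `w_1 = a` and `ℓ(w_j) = t_j` for all `j ∈ {1, …, k}`. -/
noncomputable def occG (n m : ℕ) (c : ℕ → ℕ → Option Bool) (a : Vtx) (t : List Bool) : ℕ :=
  Set.ncard {w : List Vtx | List.Chain' (Edge n m c) w ∧ w.head? = some a ∧ w.map lab = t}

end GraphDB

/-!
A walk from `root` labeled `s` passes through a clause leaf `c_{p+1}` at depth `⌈log₂ m⌉`, and
it is determined by that leaf: inside the tree every vertex has a unique parent, and from the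
leaf on every vertex has at most one successor of each label. So `occ_root^G(s) = m` forces
every leaf to start such a walk. Below `c_i` the walk stays in row `i` as long as the literals
it reads falsify `c_i`; since row `i` ends at column `n - 1`, it has to leave through a literal
of `c_i` that `s` makes true.
-/

namespace List.IsChain

variable {α β : Type*} {R : α → α → Prop} {P : α → Prop}

theorem eq_of_head?_eq_of_map_eq {f : α → β} (hP : ∀ a b, R a b → P a → P b)
    (hR : ∀ a b b', P a → R a b → R a b' → f b = f b' → b = b') :
    ∀ {l l' : List α}, l.IsChain R → l'.IsChain R → l.head? = l'.head? →
      (∀ a ∈ l.head?, P a) → l.map f = l'.map f → l = l'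
  | [], [], _, _, _, _, _ => rfl
  | [a], [a'], _, _, hhead, _, _ => by simpa using hhead
  | a :: b :: l, a' :: b' :: l', hl, hl', hhead, ha, hmap => by
    obtain rfl : a = a' := by simpa using hhead
    simp only [isChain_cons_cons, head?_cons, Option.mem_def, Option.some.injEq,
      forall_eq', map_cons, cons.injEq] at hl hl' ha hmap
    obtain rfl := hR a b b' ha hl.1 hl'.1 hmap.2.1
    rw [eq_of_head?_eq_of_map_eq hP hR hl.2 hl'.2 rfl (by simpa using hP a b hl.1 ha)
      (by simp [hmap.2.2])]
  | [], _ :: _, _, _, _, _, hmap | _ :: _, [], _, _, _, _, hmap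
  | [_], _ :: _ :: _, _, _, _, _, hmap | _ :: _ :: _, [_], _, _, _, _, hmap => by
    simp at hmap

theorem eq_of_getLast?_eq (hP : ∀ a b, R a b → P b → P a)
    (hR : ∀ a a' b, P b → R a b → R a' b → a = a') {l l' : List α}
    (hl : l.IsChain R) (hl' : l'.IsChain R) (hlast : l.getLast? = l'.getLast?)
    (hPlast : ∀ a ∈ l.getLast?, P a) (hlen : l.length = l'.length) : l = l' := by
  refine reverse_injective <| eq_of_head?_eq_of_map_eq (R := flip R) (f := fun _ => ())
    (fun a b h => hP b a h) (fun a b b' ha h h' _ => hR b b' a ha h h')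
    (isChain_reverse.2 hl) (isChain_reverse.2 hl') (by simpa using hlast)
    (by simpa using hPlast) ?_
  simp [map_const', hlen]

theorem grade_getElem {g : α → ℕ} (hg : ∀ a b, R a b → g b = g a + 1) {l : List α}
    (hl : l.IsChain R) {a : α} (ha : l.head? = some a) (k : ℕ) (hk : k < l.length) :
    g l[k] = g a + k := by
  induction k with
  | zero => cases l <;> simp_all
  | succ k ih => rw [hg _ _ (hl.getElem k hk), ih (by omega), Nat.add_assoc]

end List.IsChain

namespace GraphDB

variable {n m : ℕ} {c : ℕ → ℕ → Option Bool}

def level (m : ℕ) : Vtx → ℕ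
  | .node k _ => k
  | .u _ j => Nat.clog 2 m + j
  | .v _ j => Nat.clog 2 m + j

theorem level_eq_succ_of_edge {a b : Vtx} (h : Edge n m c a b) : level m b = level m a + 1 := by
  cases a <;> cases b <;> simp only [Edge, level] at h ⊢ <;> omega

theorem eq_of_edge_of_edge_of_lab_eq {a b b' : Vtx} (ha : Nat.clog 2 m ≤ level m a)
    (h : Edge n m c a b) (h' : Edge n m c a b') (hlab : lab b = lab b') : b = b' := by
  cases a <;> cases b <;> cases b' <;> simp only [Edge, level, lab] at * <;> grind

theorem eq_of_edge_of_edge_of_level_le {a a' b : Vtx} (hb : level m b ≤ Nat.clog 2 m)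
    (h : Edge n m c a b) (h' : Edge n m c a' b) : a = a' := by
  cases a <;> cases a' <;> cases b <;> simp only [Edge, level, Vtx.node.injEq] at h h' hb ⊢ <;>
    omega

theorem exists_lt_of_edge_of_level_eq {a b : Vtx} (ha : level m a = Nat.clog 2 m)
    (h : Edge n m c a b) : ∃ p < m, a = .node (Nat.clog 2 m) p := by
  cases a <;> cases b <;> simp only [Edge, level, Vtx.node.injEq] at h ha ⊢ <;>
    first | omega | exact ⟨_, h.2.1, ha, rfl⟩

theorem eq_u_or_eq_v_of_edge_leaf {p : ℕ} {b : Vtx}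
    (h : Edge n m c (.node (Nat.clog 2 m) p) b) : b = .u (p + 1) 1 ∨ b = .v (p + 1) 1 := by
  cases b <;> simp only [Edge, Vtx.u.injEq, Vtx.v.injEq, reduceCtorEq] at h ⊢ <;> omega

/-- `hjb` matters only for the last column, whose edges read the literal of `x_n`. -/
theorem edge_stays_in_row {i j : ℕ} {a b : Vtx} (hi : 1 ≤ i) (ha : a = .u i j ∨ a = .v i j)
    (h : Edge n m c a b) (hja : c i j ≠ some (lab a))
    (hjb : j + 1 = n → c i n ≠ some (lab b)) :
    (b = .u i (j + 1) ∨ b = .v i (j + 1)) ∧ j + 2 ≤ n := by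
  rcases ha with rfl | rfl <;> cases b <;> simp only [Edge, lab] at h hja hjb <;> grind

theorem level_getElem {w : List Vtx} (hw : w.IsChain (Edge n m c))
    (hroot : w.head? = some root) (k : ℕ) (hk : k < w.length) : level m w[k] = k := by
  simpa [root, level] using
    hw.grade_getElem (g := level m) (fun _ _ => level_eq_succ_of_edge) hroot k hk

theorem exists_sat_lit_of_getElem_clog_eq {w : List Vtx} (hw : w.IsChain (Edge n m c))
    (hn : 2 ≤ n) (hlen : Nat.clog 2 m + n < w.length) {p : ℕ}
    (hp : w[Nat.clog 2 m] = .node (Nat.clog 2 m) p) :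
    ∃ j, 1 ≤ j ∧ j ≤ n ∧
      c (p + 1) j = some ((w.map lab).getD (j + Nat.clog 2 m) true) := by
  set d := Nat.clog 2 m
  by_contra! hunsat
  have hlit : ∀ j (_ : 1 ≤ j) (_ : j ≤ n), c (p + 1) j ≠ some (lab w[d + j]) := by
    intro j hj hjn
    have hjd : j + d < (w.map lab).length := by simp; omega
    simpa only [List.getD_eq_getElem _ _ hjd, List.getElem_map, Nat.add_comm] using
      hunsat j hj hjn
  have hrow : ∀ j, 1 ≤ j → ∀ (_ : j ≤ n),
      (w[d + j] = .u (p + 1) j ∨ w[d + j] = .v (p + 1) j) ∧ j + 1 ≤ n := by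
    intro j hj
    induction j, hj using Nat.le_induction with
    | base => exact fun _ => ⟨eq_u_or_eq_v_of_edge_leaf (hp ▸ hw.getElem d (by omega)), hn⟩
    | succ j hj ih =>
      intro hjn
      exact edge_stays_in_row (by omega) (ih (by omega)).1 (hw.getElem (d + j) (by omega))
        (hlit j hj (by omega)) (fun h => by subst h; exact hlit (j + 1) (by omega) le_rfl)
  exact absurd (hrow n (by omega) le_rfl).2 (by omega)

theorem eq_of_getElem?_clog_eq {w w' : List Vtx} (hw : w.IsChain (Edge n m c))
    (hw' : w'.IsChain (Edge n m c)) (hroot : w.head? = some root)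
    (hmap : w.map lab = w'.map lab) (hd : Nat.clog 2 m < w.length)
    (hleaf : w[Nat.clog 2 m]? = w'[Nat.clog 2 m]?) : w = w' := by
  set d := Nat.clog 2 m
  have hlevel : level m w[d] = d := level_getElem hw hroot d hd
  have hlen : w.length = w'.length := by simpa using congrArg List.length hmap
  have hlast : ∀ l : List Vtx, d < l.length → (l.take (d + 1)).getLast? = l[d]? :=
    fun l hl => by simp [List.getLast?_take, List.getElem?_eq_getElem hl]
  have hsuffix : w.drop d = w'.drop d :=
    List.IsChain.eq_of_head?_eq_of_map_eq (P := (d ≤ level m ·))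
      (fun _ _ h ha => (level_eq_succ_of_edge h).symm ▸ Nat.le_succ_of_le ha)
      (fun _ _ _ ha => eq_of_edge_of_edge_of_lab_eq ha) (hw.drop d) (hw'.drop d)
      (by simpa [List.head?_drop] using hleaf)
      (by simp [List.head?_drop, List.getElem?_eq_getElem hd, hlevel])
      (by rw [List.map_drop, List.map_drop, hmap])
  have hprefix : w.take (d + 1) = w'.take (d + 1) :=
    List.IsChain.eq_of_getLast?_eq (R := Edge n m c) (P := (level m · ≤ d))
      (fun _ _ h hb => by have := level_eq_succ_of_edge h; omega)
      (fun _ _ _ hb => eq_of_edge_of_edge_of_level_le hb) (hw.take _) (hw'.take _)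
      (by rw [hlast w hd, hlast w' (hlen ▸ hd), hleaf])
      (by simp [hlast w hd, List.getElem?_eq_getElem hd, hlevel])
      (by simp [hlen])
  have hsplit : ∀ l : List Vtx, (l.take (d + 1)).take d ++ l.drop d = l := fun l => by
    rw [List.take_take, min_eq_left (Nat.le_succ d), List.take_append_drop]
  rw [← hsplit w, ← hsplit w', hprefix, hsuffix]

theorem exists_leaf_sat_of_walk {w : List Vtx} (hw : w.IsChain (Edge n m c)) (hn : 2 ≤ n)
    (hroot : w.head? = some root) (hlen : Nat.clog 2 m + n < w.length) :
    ∃ p < m, w[Nat.clog 2 m]? = some (.node (Nat.clog 2 m) p) ∧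
      ∃ j, 1 ≤ j ∧ j ≤ n ∧
        c (p + 1) j = some ((w.map lab).getD (j + Nat.clog 2 m) true) := by
  obtain ⟨p, hpm, hp⟩ := exists_lt_of_edge_of_level_eq
    (level_getElem hw hroot _ (by omega)) (hw.getElem (Nat.clog 2 m) (by omega))
  exact ⟨p, hpm, by rw [List.getElem?_eq_getElem (by omega), hp],
    exists_sat_lit_of_getElem_clog_eq hw hn hlen hp⟩

theorem assignment_of_occ_eq_m_general (n m : ℕ) (hn : 2 ≤ n)
    (c : ℕ → ℕ → Option Bool)
    (s : List Bool) (hlen : s.length = n + 1 + Nat.clog 2 m)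
    (hocc : occG n m c root s = m) :
    ∀ i, 1 ≤ i → i ≤ m →
      ∃ j, 1 ≤ j ∧ j ≤ n ∧ c i j = some (s.getD (j + Nat.clog 2 m) true) := by
  set d := Nat.clog 2 m
  intro i hi him
  by_contra! hunsat
  set S := {w : List Vtx | w.IsChain (Edge n m c) ∧ w.head? = some root ∧ w.map lab = s}
  set T : Finset (Option Vtx) := ((Finset.range m).erase (i - 1)).image (some <| .node d ·)
  have hlenS : ∀ w ∈ S, d + n < w.length := fun w hw => by
    rw [← List.length_map lab, hw.2.2]; omega
  have hleaf : ∀ w ∈ S, w[d]? ∈ T := fun w hw => by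
    obtain ⟨p, hpm, hp, j, hj, hjn, hsat⟩ := exists_leaf_sat_of_walk hw.1 hn hw.2.1 (hlenS w hw)
    have hpi : p ≠ i - 1 := by
      rintro rfl
      exact hunsat j hj hjn (by rwa [hw.2.2, Nat.sub_add_cancel hi] at hsat)
    exact Finset.mem_image.2 ⟨p, Finset.mem_erase.2 ⟨hpi, Finset.mem_range.2 hpm⟩, hp.symm⟩
  have hinj : Set.InjOn (·[d]?) S := fun w hw w' hw' h =>
    eq_of_getElem?_clog_eq hw.1 hw'.1 hw.2.1 (hw.2.2.trans hw'.2.2.symm)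
      (by have := hlenS w hw; omega) h
  have hcard : S.ncard ≤ m - 1 := calc
    S.ncard ≤ (T : Set (Option Vtx)).ncard := Set.ncard_le_ncard_of_injOn _ hleaf hinj
    _ ≤ ((Finset.range m).erase (i - 1)).card := by
      rw [Set.ncard_coe_finset]; exact Finset.card_image_le
    _ = m - 1 := by rw [Finset.card_erase_of_mem (by simp; omega), Finset.card_range]
  have : S.ncard = m := hocc
  omega

/-- if a sequence `s = s_0 s_1 … s_{n+⌈log₂ m⌉} ∈ {0,1}^{n+1+⌈log₂ m⌉}`
satisfies `occ_root^G(s) = m`, then the boolean assignment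
`x_j := s_{j+⌈log₂ m⌉}` (for `j = 1, …, n`) satisfies every clause
`c_1(x), …, c_m(x)`: each clause contains a literal made true by the
assignment. -/
theorem assignment_of_occ_eq_m (n m : ℕ) (hn : 2 ≤ n) (hm : 1 ≤ m)
    (c : ℕ → ℕ → Option Bool)
    (hne : ∀ i, 1 ≤ i → i ≤ m → ∃ j, 1 ≤ j ∧ j ≤ n ∧ c i j ≠ none)
    (s : List Bool) (hlen : s.length = n + 1 + Nat.clog 2 m)
    (hocc : occG n m c root s = m) :
    ∀ i, 1 ≤ i → i ≤ m →
      ∃ j, 1 ≤ j ∧ j ≤ n ∧ c i j = some (s.getD (j + Nat.clog 2 m) true) :=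
  assignment_of_occ_eq_m_general n m hn c s hlen hocc

end GraphDB
end

section
/- The formula c_1(x) ∧ c_2(x) ∧ … ∧ c_m(x) is satisfiable if and only if there exists a sequence t ∈ {0,1}^{n+1+⌈log₂ m⌉} with occ_root^G(t) = m; equivalently, the formula is satisfiable if and only if the maximum of occ_root^G(t) over all t ∈ {0,1}^{n+1+⌈log₂ m⌉} equals m. -/
/-!
Write `d = ⌈log₂ m⌉`. Every walk from `root` spends its first `d + 1` vertices in the tree, all
labelled `1`, so only words `1^(d+1) s₁ ⋯ sₙ` can have occurrences. For such a word, a walk is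
fixed by the leaf `c_i` it passes: from there the labels `sⱼ` choose between `u` and `v` at every
level, and the walk stays in the row of `c_i` until it meets a literal made true by `s`, after
which it continues in the shared row `0`. Level `n` belongs to row `0` only, so the walk exists
iff `c_i` is satisfied by `s`. Hence `occ_root(1^(d+1) s) = #{i | s satisfies c_i} ≤ m`, with
equality iff `s` satisfies every clause.
-/

namespace GraphDB

open Finset

variable {n m : ℕ} {c : ℕ → ℕ → Option Bool}

def ClauseSat (c : ℕ → ℕ → Option Bool) (k : ℕ) (s : ℕ → Bool) (i : ℕ) : Prop :=
  ∃ j, 1 ≤ j ∧ j ≤ k ∧ c i j = some (s j)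

lemma ClauseSat.mono {k k' : ℕ} {s : ℕ → Bool} {i : ℕ} (h : ClauseSat c k s i) (hk : k ≤ k') :
    ClauseSat c k' s i :=
  let ⟨j, hj1, hjk, hj⟩ := h
  ⟨j, hj1, hjk.trans hk, hj⟩

lemma not_clauseSat_zero {s : ℕ → Bool} {i : ℕ} : ¬ClauseSat c 0 s i := by
  rintro ⟨j, hj1, hj0, -⟩
  omega

lemma clauseSat_succ {k : ℕ} {s : ℕ → Bool} {i : ℕ} :
    ClauseSat c (k + 1) s i ↔ ClauseSat c k s i ∨ c i (k + 1) = some (s (k + 1)) := by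
  constructor
  · rintro ⟨j, hj1, hjk, hj⟩
    rcases Nat.lt_or_eq_of_le hjk with hlt | rfl
    · exact Or.inl ⟨j, hj1, Nat.le_of_lt_succ hlt, hj⟩
    · exact Or.inr hj
  · rintro (h | h)
    · exact h.mono k.le_succ
    · exact ⟨k + 1, k.succ_pos, le_rfl, h⟩

@[simp] lemma lab_node (k p : ℕ) : lab (.node k p) = true := rfl

def Vtx.uv (b : Bool) (i j : ℕ) : Vtx := if b then .u i j else .v i j

@[simp] lemma lab_uv (b : Bool) (i j : ℕ) : lab (.uv b i j) = b := by
  cases b <;> rfl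

lemma edge_uv_uv_iff {b b' : Bool} {T j T' j' : ℕ} :
    Edge n m c (.uv b T j) (.uv b' T' j') ↔ j' = j + 1 ∧
      ((T = 0 ∧ T' = 0 ∧ 2 ≤ j ∧ j + 1 ≤ n) ∨
       (1 ≤ T ∧ T ≤ m ∧ T' = 0 ∧ 1 ≤ j ∧ j + 1 ≤ n ∧
          (c T j = some b ∨ (j + 1 = n ∧ c T n = some b'))) ∨
       (1 ≤ T ∧ T ≤ m ∧ T' = T ∧ 1 ≤ j ∧ j + 2 ≤ n ∧ c T j ≠ some b)) := by
  cases b <;> cases b' <;> simp [Vtx.uv, Edge]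

lemma edge_node_node_iff {k p k' q : ℕ} :
    Edge n m c (.node k p) (.node k' q) ↔ k' = k + 1 ∧ k' ≤ Nat.clog 2 m ∧
      (q = 2 * p ∨ q = 2 * p + 1) ∧ q * 2 ^ (Nat.clog 2 m - k') < m :=
  Iff.rfl

lemma edge_node_uv_iff {k p : ℕ} {b : Bool} {T j : ℕ} :
    Edge n m c (.node k p) (.uv b T j) ↔ k = Nat.clog 2 m ∧ p < m ∧ T = p + 1 ∧ j = 1 := by
  cases b <;> rfl

lemma exists_eq_uv_of_edge_uv {b : Bool} {T j : ℕ} {x : Vtx} (h : Edge n m c (.uv b T j) x) :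
    ∃ T', x = .uv (lab x) T' (j + 1) := by
  cases b <;> cases x <;> simp_all [Vtx.uv, Edge, lab]

lemma lt_and_eq_uv_of_edge_leaf {p : ℕ} {x : Vtx} (h : Edge n m c (.node (Nat.clog 2 m) p) x) :
    p < m ∧ x = .uv (lab x) (p + 1) 1 := by
  cases x <;> grind [Vtx.uv, Edge, lab]

lemma exists_eq_node_succ_of_edge {k p : ℕ} {x : Vtx} (hk : k < Nat.clog 2 m)
    (h : Edge n m c (.node k p) x) : ∃ q, x = .node (k + 1) q := by
  cases x <;> simp_all [Edge]

lemma eq_node_div_two_of_edge {k q : ℕ} {x : Vtx} (h : Edge n m c x (.node (k + 1) q)) :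
    x = .node k (q / 2) := by
  cases x <;> grind [Edge]

open Classical in
/-- The row (`i`, or the shared row `0`) of the level-`j` vertex on the walk through the gadget
of clause `i` whose labels are given by `s`. -/
noncomputable def gadgetRow (c : ℕ → ℕ → Option Bool) (n : ℕ) (s : ℕ → Bool) (i j : ℕ) : ℕ :=
  if j = n ∨ ClauseSat c (j - 1) s i then 0 else i

section gadgetRow

variable {s : ℕ → Bool} {i j : ℕ}

lemma gadgetRow_succ_of_sat (h : j + 1 = n ∨ ClauseSat c j s i) :
    gadgetRow c n s i (j + 1) = 0 := by
  simp [gadgetRow, h]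

lemma gadgetRow_succ_of_not_sat (hj : j + 1 ≠ n) (h : ¬ClauseSat c j s i) :
    gadgetRow c n s i (j + 1) = i := by
  simp [gadgetRow, hj, h]

lemma gadgetRow_one (hn : 2 ≤ n) : gadgetRow c n s i 1 = i :=
  gadgetRow_succ_of_not_sat (by omega) not_clauseSat_zero

lemma edge_gadgetRow_iff (hi : 1 ≤ i) (him : i ≤ m) (hjn : j + 2 ≤ n) {T : ℕ} :
    Edge n m c (.uv (s (j + 1)) (gadgetRow c n s i (j + 1)) (j + 1)) (.uv (s (j + 2)) T (j + 2)) ↔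
      T = gadgetRow c n s i (j + 2) ∧ (j + 2 = n → ClauseSat c n s i) := by
  rw [edge_uv_uv_iff]
  by_cases hprev : ClauseSat c j s i
  · have hj : 1 ≤ j := by obtain ⟨j', hj', hj'j, -⟩ := hprev; omega
    rw [gadgetRow_succ_of_sat (.inr hprev), gadgetRow_succ_of_sat (.inr (hprev.mono j.le_succ))]
    have hsatn := hprev.mono (by omega : j ≤ n)
    grind
  rw [gadgetRow_succ_of_not_sat (by omega) hprev]
  by_cases hcur : c i (j + 1) = some (s (j + 1))
  · have hsat : ClauseSat c (j + 1) s i := clauseSat_succ.2 (.inr hcur)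
    rw [gadgetRow_succ_of_sat (.inr hsat)]
    have hsatn := hsat.mono (by omega : j + 1 ≤ n)
    grind
  have hnot : ¬ClauseSat c (j + 1) s i := by simp [clauseSat_succ, hprev, hcur]
  by_cases hlast : j + 2 = n
  · subst hlast
    rw [gadgetRow_succ_of_sat (.inl rfl)]
    grind [clauseSat_succ]
  · rw [gadgetRow_succ_of_not_sat hlast hnot]
    grind

end gadgetRow

noncomputable def canonicalVertex (c : ℕ → ℕ → Option Bool) (m n : ℕ) (s : ℕ → Bool) (i k : ℕ) :
    Vtx :=
  if k ≤ Nat.clog 2 m then .node k ((i - 1) / 2 ^ (Nat.clog 2 m - k))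
  else .uv (s (k - Nat.clog 2 m)) (gadgetRow c n s i (k - Nat.clog 2 m)) (k - Nat.clog 2 m)

noncomputable def canonicalWalk (c : ℕ → ℕ → Option Bool) (m n : ℕ) (s : ℕ → Bool) (i : ℕ) :
    List Vtx :=
  (List.range (Nat.clog 2 m + 1 + n)).map (canonicalVertex c m n s i)

def assignmentWord (m n : ℕ) (s : ℕ → Bool) : List Bool :=
  (List.range (Nat.clog 2 m + 1 + n)).map fun k =>
    if k ≤ Nat.clog 2 m then true else s (k - Nat.clog 2 m)

section canonicalWalk

variable {s : ℕ → Bool} {i : ℕ}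

lemma length_assignmentWord : (assignmentWord m n s).length = Nat.clog 2 m + 1 + n := by
  simp [assignmentWord]

lemma canonicalVertex_of_le {k : ℕ} (hk : k ≤ Nat.clog 2 m) :
    canonicalVertex c m n s i k = .node k ((i - 1) / 2 ^ (Nat.clog 2 m - k)) :=
  if_pos hk

lemma canonicalVertex_clog_add (j : ℕ) :
    canonicalVertex c m n s i (Nat.clog 2 m + 1 + j) =
      .uv (s (j + 1)) (gadgetRow c n s i (j + 1)) (j + 1) := by
  simp only [canonicalVertex, if_neg (by omega : ¬Nat.clog 2 m + 1 + j ≤ Nat.clog 2 m),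
    show Nat.clog 2 m + 1 + j - Nat.clog 2 m = j + 1 by omega]

lemma length_canonicalWalk : (canonicalWalk c m n s i).length = Nat.clog 2 m + 1 + n := by
  simp [canonicalWalk]

lemma getElem_canonicalWalk {k : ℕ} (hk : k < (canonicalWalk c m n s i).length) :
    (canonicalWalk c m n s i)[k] = canonicalVertex c m n s i k := by
  simp [canonicalWalk]

lemma map_lab_canonicalWalk : (canonicalWalk c m n s i).map lab = assignmentWord m n s := by
  simp only [canonicalWalk, assignmentWord, List.map_map]
  congr 1
  funext k
  by_cases hk : k ≤ Nat.clog 2 m <;> simp [canonicalVertex, hk]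

lemma head_canonicalWalk (hi : 1 ≤ i) (him : i ≤ m) :
    (canonicalWalk c m n s i).head? = some root := by
  have hlt : i - 1 < 2 ^ Nat.clog 2 m := by
    have := Nat.le_pow_clog one_lt_two m
    omega
  rw [List.head?_eq_getElem?, List.getElem?_eq_getElem (by simp [length_canonicalWalk]),
    getElem_canonicalWalk, canonicalVertex_of_le (Nat.zero_le _), Nat.sub_zero,
    Nat.div_eq_of_lt hlt]
  rfl

lemma isChain_canonicalWalk (hn : 2 ≤ n) (hi : 1 ≤ i) (him : i ≤ m) (hsat : ClauseSat c n s i) :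
    (canonicalWalk c m n s i).IsChain (Edge n m c) := by
  refine (List.isChain_map _).2 ((List.isChain_range _ _).2 fun k hk => ?_)
  rw [Nat.succ_eq_add_one]
  rcases lt_trichotomy k (Nat.clog 2 m) with hk | rfl | hk
  · rw [canonicalVertex_of_le hk.le, canonicalVertex_of_le (k := k + 1) hk]
    have hdiv : (i - 1) / 2 ^ (Nat.clog 2 m - k) =
        (i - 1) / 2 ^ (Nat.clog 2 m - (k + 1)) / 2 := by
      rw [Nat.div_div_eq_div_mul, ← pow_succ,
        show Nat.clog 2 m - (k + 1) + 1 = Nat.clog 2 m - k by omega]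
    refine edge_node_node_iff.2 ⟨rfl, hk, by omega, ?_⟩
    calc (i - 1) / 2 ^ (Nat.clog 2 m - (k + 1)) * 2 ^ (Nat.clog 2 m - (k + 1)) ≤ i - 1 :=
          Nat.div_mul_le_self _ _
      _ < m := by omega
  · rw [canonicalVertex_of_le le_rfl, ← add_zero (Nat.clog 2 m + 1),
      canonicalVertex_clog_add, gadgetRow_one hn, edge_node_uv_iff, Nat.sub_self, pow_zero,
      Nat.div_one]
    exact ⟨rfl, by omega, by omega, rfl⟩
  · obtain ⟨j, rfl⟩ : ∃ j, k = Nat.clog 2 m + 1 + j := ⟨k - Nat.clog 2 m - 1, by omega⟩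
    rw [canonicalVertex_clog_add, add_assoc _ j, canonicalVertex_clog_add]
    exact (edge_gadgetRow_iff hi him (by omega)).2 ⟨rfl, fun _ => hsat⟩

end canonicalWalk

section walks

variable {w : List Vtx} (hc : w.IsChain (Edge n m c))
include hc

lemma exists_getElem_eq_node (hh : w.head? = some root) :
    ∀ k (hk : k < w.length), k ≤ Nat.clog 2 m → ∃ q, w[k] = .node k q
  | 0, hk, _ => ⟨0, by simpa [List.head?_eq_getElem?, List.getElem?_eq_getElem hk, root] using hh⟩
  | k + 1, hk, hkd => by
    obtain ⟨q, hq⟩ := exists_getElem_eq_node hh k (by omega) (by omega)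
    have hE := hc.getElem k hk
    rw [hq] at hE
    exact exists_eq_node_succ_of_edge (by omega) hE

lemma getElem_eq_node_div {K p : ℕ} (hK : K < w.length) (hp : w[K] = .node K p) {k : ℕ}
    (hk : k ≤ K) : w[k] = .node k (p / 2 ^ (K - k)) := by
  induction hk using Nat.decreasingInduction with
  | self => simpa using hp
  | of_succ k hkK ih =>
    have hE := hc.getElem k (by omega)
    rw [ih] at hE
    rw [eq_node_div_two_of_edge hE, Nat.div_div_eq_div_mul, ← pow_succ,
      show K - (k + 1) + 1 = K - k by omega]

lemma getElem_eq_gadget (hn : 2 ≤ n) {s : ℕ → Bool} {p : ℕ}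
    (hlen : w.length = Nat.clog 2 m + 1 + n)
    (hp : w[Nat.clog 2 m] = .node (Nat.clog 2 m) p)
    (hlab : ∀ j (hj : j < n), lab w[Nat.clog 2 m + 1 + j] = s (j + 1)) :
    p < m ∧ ∀ j (hj : j < n),
      w[Nat.clog 2 m + 1 + j] = .uv (s (j + 1)) (gadgetRow c n s (p + 1) (j + 1)) (j + 1) := by
  have hleaf := hc.getElem (Nat.clog 2 m) (by omega)
  rw [hp] at hleaf
  obtain ⟨hpm, hnext⟩ := lt_and_eq_uv_of_edge_leaf hleaf
  refine ⟨hpm, fun j hj => ?_⟩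
  induction j with
  | zero => rw [hnext, ← hlab 0 hj, gadgetRow_one hn]
  | succ j ih =>
    have hE := hc.getElem (Nat.clog 2 m + 1 + j) (by omega)
    rw [ih (by omega)] at hE
    obtain ⟨T, hT⟩ := exists_eq_uv_of_edge_uv hE
    have hl : lab w[Nat.clog 2 m + 1 + j + 1] = s (j + 2) := hlab (j + 1) hj
    rw [hl] at hT
    rw [hT] at hE
    refine hT.trans ?_
    rw [((edge_gadgetRow_iff (by omega) hpm (by omega)).1 hE).1]

end walks

lemma exists_canonicalWalk_eq (hn : 2 ≤ n) {s : ℕ → Bool} {w : List Vtx}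
    (hc : w.IsChain (Edge n m c)) (hh : w.head? = some root)
    (hl : w.map lab = assignmentWord m n s) :
    ∃ i, (1 ≤ i ∧ i ≤ m) ∧ ClauseSat c n s i ∧ canonicalWalk c m n s i = w := by
  have hlen : w.length = Nat.clog 2 m + 1 + n := by
    rw [← length_assignmentWord (s := s), ← hl, List.length_map]
  have hlab (j : ℕ) (hj : j < n) : lab w[Nat.clog 2 m + 1 + j] = s (j + 1) := by
    have := List.getElem_of_eq hl (i := Nat.clog 2 m + 1 + j)
      (by rw [List.length_map]; omega)
    simpa [assignmentWord, show ¬Nat.clog 2 m + 1 + j ≤ Nat.clog 2 m by omega,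
      show Nat.clog 2 m + 1 + j - Nat.clog 2 m = j + 1 by omega] using this
  obtain ⟨p, hp⟩ := exists_getElem_eq_node hc hh _ (by omega) le_rfl
  obtain ⟨hpm, hgadget⟩ := getElem_eq_gadget hc hn hlen hp hlab
  have hsat : ClauseSat c n s (p + 1) := by
    obtain ⟨j, rfl⟩ : ∃ j, n = j + 2 := ⟨n - 2, by omega⟩
    have hE := hc.getElem (Nat.clog 2 m + 1 + j) (by omega)
    have hlast : w[Nat.clog 2 m + 1 + j + 1] = _ := hgadget (j + 1) (by omega)
    rw [hgadget j (by omega), hlast] at hE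
    exact ((edge_gadgetRow_iff (by omega) hpm le_rfl).1 hE).2 rfl
  refine ⟨p + 1, ⟨by omega, hpm⟩, hsat,
    List.ext_getElem (by rw [length_canonicalWalk, hlen]) fun k hk _ => ?_⟩
  rw [getElem_canonicalWalk]
  by_cases hkd : k ≤ Nat.clog 2 m
  · rw [canonicalVertex_of_le hkd, getElem_eq_node_div hc _ hp hkd, Nat.add_sub_cancel]
  · obtain ⟨j, rfl⟩ : ∃ j, k = Nat.clog 2 m + 1 + j := ⟨k - Nat.clog 2 m - 1, by omega⟩
    rw [canonicalVertex_clog_add, hgadget j (by omega)]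

lemma canonicalWalk_injOn (s : ℕ → Bool) : Set.InjOn (canonicalWalk c m n s) (Set.Ici 1) := by
  intro a ha b hb hab
  have := List.getElem_of_eq hab (i := Nat.clog 2 m) (by rw [length_canonicalWalk]; omega)
  simp only [getElem_canonicalWalk, canonicalVertex_of_le le_rfl, Nat.sub_self, pow_zero,
    Nat.div_one, Vtx.node.injEq, true_and] at this
  have := Set.mem_Ici.1 ha
  have := Set.mem_Ici.1 hb
  omega

open Classical in
lemma occG_assignmentWord (hn : 2 ≤ n) (s : ℕ → Bool) :
    occG n m c root (assignmentWord m n s) = #{i ∈ Icc 1 m | ClauseSat c n s i} := by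
  calc occG n m c root (assignmentWord m n s)
      = (canonicalWalk c m n s '' {i | (1 ≤ i ∧ i ≤ m) ∧ ClauseSat c n s i}).ncard := by
        rw [occG]
        congr 1
        ext w
        constructor
        · rintro ⟨hc, hh, hl⟩
          obtain ⟨i, hi, hsat, rfl⟩ := exists_canonicalWalk_eq hn hc hh hl
          exact ⟨i, ⟨hi, hsat⟩, rfl⟩
        · rintro ⟨i, ⟨hi, hsat⟩, rfl⟩
          exact ⟨isChain_canonicalWalk hn hi.1 hi.2 hsat, head_canonicalWalk hi.1 hi.2,
            map_lab_canonicalWalk⟩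
    _ = {i | (1 ≤ i ∧ i ≤ m) ∧ ClauseSat c n s i}.ncard :=
        ((canonicalWalk_injOn s).mono fun _ hi => hi.1.1).ncard_image
    _ = _ := by
        rw [← Set.ncard_coe_finset]
        congr 1
        ext
        simp

lemma occG_eq_zero {t : List Bool} {k : ℕ} (hk : k ≤ Nat.clog 2 m) (htk : t[k]? = some false) :
    occG n m c root t = 0 := by
  rw [occG]
  convert Set.ncard_empty (List Vtx)
  refine Set.eq_empty_of_forall_notMem ?_
  rintro w ⟨hc, hh, hl⟩
  have hkw : k < w.length := by
    rw [← List.length_map (f := lab), hl]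
    exact (List.getElem?_eq_some_iff.1 htk).1
  obtain ⟨q, hq⟩ := exists_getElem_eq_node hc hh k hkw hk
  have hk_lab : (w.map lab)[k]? = some true := by simp [hkw, hq]
  rw [hl, htk] at hk_lab
  cases hk_lab

lemma eq_assignmentWord {t : List Bool} (ht : t.length = n + 1 + Nat.clog 2 m)
    (htrue : ∀ k ≤ Nat.clog 2 m, t[k]? = some true) :
    t = assignmentWord m n fun j => t.getD (Nat.clog 2 m + j) false := by
  refine List.ext_getElem (by rw [length_assignmentWord]; omega) fun k hk _ => ?_
  simp only [assignmentWord, List.getElem_map, List.getElem_range]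
  split_ifs with hkd
  · simpa [hk] using htrue k hkd
  · simp [show Nat.clog 2 m + (k - Nat.clog 2 m) = k by omega, hk]

open Classical in
lemma exists_occG_le_card (hn : 2 ≤ n) {t : List Bool} (ht : t.length = n + 1 + Nat.clog 2 m) :
    ∃ s : ℕ → Bool, occG n m c root t ≤ #{i ∈ Icc 1 m | ClauseSat c n s i} := by
  by_cases htrue : ∀ k ≤ Nat.clog 2 m, t[k]? = some true
  · refine ⟨fun j => t.getD (Nat.clog 2 m + j) false, le_of_eq ?_⟩
    rw [← occG_assignmentWord hn, ← eq_assignmentWord ht htrue]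
  push Not at htrue
  obtain ⟨k, hk, htk⟩ := htrue
  have hfalse : t[k]? = some false := by
    rw [List.getElem?_eq_getElem (by omega)] at htk ⊢
    simpa using htk
  exact ⟨fun _ => true, (occG_eq_zero hk hfalse).trans_le (Nat.zero_le _)⟩

open Classical in
lemma occG_le (hn : 2 ≤ n) {t : List Bool} (ht : t.length = n + 1 + Nat.clog 2 m) :
    occG n m c root t ≤ m := by
  obtain ⟨s, hs⟩ := exists_occG_le_card (c := c) hn ht
  exact hs.trans ((card_filter_le _ _).trans_eq (by simp))

open Classical in
lemma satisfiable_iff_exists_occG_eq (hn : 2 ≤ n) :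
    (∃ s, ∀ i, 1 ≤ i → i ≤ m → ClauseSat c n s i) ↔
      ∃ t : List Bool, t.length = n + 1 + Nat.clog 2 m ∧ occG n m c root t = m := by
  constructor
  · rintro ⟨s, hs⟩
    refine ⟨assignmentWord m n s, by rw [length_assignmentWord]; omega, ?_⟩
    rw [occG_assignmentWord hn,
      filter_true_of_mem fun i hi => hs i (mem_Icc.1 hi).1 (mem_Icc.1 hi).2,
      Nat.card_Icc, Nat.add_sub_cancel]
  · rintro ⟨t, ht, hocc⟩
    obtain ⟨s, hs⟩ := exists_occG_le_card (c := c) hn ht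
    have hall := eq_of_subset_of_card_le (filter_subset _ (Icc 1 m)) (by simpa [hocc] using hs)
    exact ⟨s, fun i h1 h2 => (mem_filter.1 (hall ▸ mem_Icc.2 ⟨h1, h2⟩)).2⟩

lemma _root_.Nat.sSup_eq_iff_mem {S : Set ℕ} {m : ℕ} (hne : S.Nonempty) (hm : m ∈ upperBounds S) :
    sSup S = m ↔ m ∈ S :=
  ⟨fun h => h ▸ Nat.sSup_mem hne ⟨m, hm⟩, fun h => IsGreatest.csSup_eq ⟨h, hm⟩⟩

theorem satisfiable_iff_occ_eq_m_general (n m : ℕ) (hn : 2 ≤ n)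
    (c : ℕ → ℕ → Option Bool) :
    ((∃ y : ℕ → Bool, ∀ i, 1 ≤ i → i ≤ m →
        ∃ j, 1 ≤ j ∧ j ≤ n ∧ c i j = some (y j)) ↔
      (∃ t : List Bool, t.length = n + 1 + Nat.clog 2 m ∧ occG n m c root t = m)) ∧
    ((∃ y : ℕ → Bool, ∀ i, 1 ≤ i → i ≤ m →
        ∃ j, 1 ≤ j ∧ j ≤ n ∧ c i j = some (y j)) ↔
      sSup {k : ℕ | ∃ t : List Bool,
        t.length = n + 1 + Nat.clog 2 m ∧ occG n m c root t = k} = m) := by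
  have hsat := satisfiable_iff_exists_occG_eq (m := m) (c := c) hn
  refine ⟨hsat, hsat.trans ?_⟩
  rw [Nat.sSup_eq_iff_mem]
  · rfl
  · exact ⟨_, List.replicate _ true, List.length_replicate, rfl⟩
  · rintro _ ⟨t, ht, rfl⟩
    exact occG_le hn ht

/-- Theorem 3 of the paper: the formula
`c_1(x) ∧ … ∧ c_m(x)` is satisfiable if and only if some sequence
`t ∈ {0,1}^{n+1+⌈log₂ m⌉}` has `occ_root^G(t) = m`; equivalently, it is
satisfiable if and only if the maximum of `occ_root^G(t)` over all such `t`
equals `m`. -/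
theorem satisfiable_iff_occ_eq_m (n m : ℕ) (hn : 2 ≤ n) (hm : 1 ≤ m)
    (c : ℕ → ℕ → Option Bool)
    (hne : ∀ i, 1 ≤ i → i ≤ m → ∃ j, 1 ≤ j ∧ j ≤ n ∧ c i j ≠ none) :
    ((∃ y : ℕ → Bool, ∀ i, 1 ≤ i → i ≤ m →
        ∃ j, 1 ≤ j ∧ j ≤ n ∧ c i j = some (y j)) ↔
      (∃ t : List Bool, t.length = n + 1 + Nat.clog 2 m ∧ occG n m c root t = m)) ∧
    ((∃ y : ℕ → Bool, ∀ i, 1 ≤ i → i ≤ m →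
        ∃ j, 1 ≤ j ∧ j ≤ n ∧ c i j = some (y j)) ↔
      sSup {k : ℕ | ∃ t : List Bool,
        t.length = n + 1 + Nat.clog 2 m ∧ occG n m c root t = k} = m) :=
  satisfiable_iff_occ_eq_m_general n m hn c

end GraphDB
end

section
/- Let n ≥ 2 and m ≥ 1, and consider the uniform distribution over {0,1}-labelings of T^m_n (and, on the right-hand side, independent uniform labelings of T^i_{n−1} and T^{2m−i}_{n−1}). Then for every integer x: Pr(M^m_n < x) = ∑_{i=0}^{2m} (C(2m, i) / 2^{2m}) · Pr(M^i_{n−1} < x) · Pr(M^{2m−i}_{n−1} < x), where by convention Pr(M^0_{n−1} < x) = 1 for x ≥ 1. -/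
/-!
The root label of `T^m_n` can always be matched, so `M^m_n` is the largest number of
root-to-leaf paths sharing a label sequence in the forest of the `2m` subtrees below the root.
Cutting each of these trees at its root, the paths labelled `t₁ t₂ … tₙ` are exactly the paths
labelled `t₂ … tₙ` in the child subtrees of the trees whose root is labelled `t₁`. Hence, once
the set of `i` roots labelled `true` is fixed, `M^m_n < x` says that two independent uniform
forests, of `2i` and of `2(2m - i)` trees of depth `n - 2`, both have maximum `< x`; summing
over the `2^(2m)` equally likely root labellings produces the binomial weights.
-/

namespace TreeDB

/-- The sample space of `{0,1}`-labelings of the tree `T^m_n` (the rooted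
tree whose root has `2m` children, each of which is the root of a full
binary tree of depth `n-1`): a labeling consists of the label of the root
together with, for each of the `2m` children, a labeling of the full binary
tree of depth `n-1` rooted at that child.  That binary tree has `2^n - 1`
vertices, stored in heap order: the vertex with heap index `h ∈ [1, 2^n - 1]`
(root `1`, children of `h` being `2h` and `2h+1`) is stored at position
`h - 1`. -/
abbrev Ω (m n : ℕ) : Type := Bool × (Fin (2 * m) → Fin (2 ^ n - 1) → Bool)

/-- The heap index of the vertex of a full binary tree reached from the root
by the descent `p` (`false` = left, `true` = right). -/
def heapIdx (p : List Bool) : ℕ := p.foldl (fun h b => 2 * h + b.toNat) 1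

/-- The label of the vertex with heap index `h` in a heap-stored labeled
full binary tree `g`. -/
def sub {N : ℕ} (g : Fin N → Bool) (h : ℕ) : Bool :=
  if hh : h - 1 < N then g ⟨h - 1, hh⟩ else false

/-- The sequence of the `n` labels read along the first `n` vertices of the
root-to-leaf path of the heap-stored labeled full binary tree `g`
determined by the descent `p`. -/
def pathLabels {N : ℕ} (n : ℕ) (g : Fin N → Bool) (p : List Bool) : List Bool :=
  (List.range n).map fun j => sub g (heapIdx (p.take j))

/-- `occ ℓ t` is the number of root-to-leaf paths `w_0 w_1 … w_n` of `T^m_n`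
with `ℓ(w_j) = t_j` for all `j`, for a labeling `ℓ` of `T^m_n` and a
sequence `t = t_0 t_1 … t_n ∈ {0,1}^{n+1}`.  A root-to-leaf path consists of
the root, a child `i` of the root, and a descent `p ∈ {0,1}^{n-1}` in the
full binary tree of depth `n-1` rooted at that child. -/
def occ {m n : ℕ} (ℓ : Ω m n) (t : List Bool) : ℕ :=
  match t with
  | [] => 0
  | t0 :: ts =>
      if ℓ.1 = t0 then
        ∑ i : Fin (2 * m), ∑ p : Fin (n - 1) → Bool,
          if pathLabels n (ℓ.2 i) (List.ofFn p) = ts then 1 else 0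
      else 0

/-- The random variable `M^m_n`: the maximum over `t ∈ {0,1}^{n+1}` of
`occ ℓ t`. -/
def Mval {m n : ℕ} (ℓ : Ω m n) : ℕ :=
  Finset.univ.sup fun t : Fin (n + 1) → Bool => occ ℓ (List.ofFn t)

/-- The probability of the event `P` under the uniform distribution over
`{0,1}`-labelings of `T^m_n`. -/
def Pr (m n : ℕ) (P : Ω m n → Prop) [DecidablePred P] : ℚ :=
  ((Finset.univ.filter P).card : ℚ) / (Fintype.card (Ω m n) : ℚ)

/-- The expectation of `f` under the uniform distribution over
`{0,1}`-labelings of `T^m_n`. -/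
def Exp (m n : ℕ) (f : Ω m n → ℕ) : ℚ :=
  (∑ ℓ : Ω m n, (f ℓ : ℚ)) / (Fintype.card (Ω m n) : ℚ)

/-- The labeled full binary tree of depth `n - 2` rooted at the left
(`s = false`) or right (`s = true`) child of the root of the heap-stored
labeled full binary tree `g` of depth `n - 1`. -/
def childSub {n : ℕ} (g : Fin (2 ^ n - 1) → Bool) (s : Bool) :
    Fin (2 ^ (n - 1) - 1) → Bool :=
  fun h => sub g ((h.val + 1) + (1 + s.toNat) * 2 ^ Nat.log2 (h.val + 1))

end TreeDB

namespace TreeDB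

open Finset

abbrev HeapTree (d : ℕ) : Type := Fin (2 ^ (d + 1) - 1) → Bool

lemma heapIdx_append_singleton (l : List Bool) (b : Bool) :
    heapIdx (l ++ [b]) = 2 * heapIdx l + b.toNat := by
  simp [heapIdx, List.foldl_append]

lemma heapIdx_cons (b : Bool) (l : List Bool) :
    heapIdx (b :: l) = heapIdx l + (1 + b.toNat) * 2 ^ l.length := by
  induction l using List.reverseRecOn with
  | nil => simp only [heapIdx, List.foldl_cons, List.foldl_nil, List.length_nil, pow_zero]; omega
  | append_singleton l c ih =>
    rw [← List.cons_append, heapIdx_append_singleton, heapIdx_append_singleton, ih]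
    simp only [List.length_append, List.length_singleton, pow_succ]
    ring

lemma heapIdx_mem_Ico (l : List Bool) :
    heapIdx l ∈ Set.Ico (2 ^ l.length) (2 ^ (l.length + 1)) := by
  induction l using List.reverseRecOn with
  | nil => simp [heapIdx]
  | append_singleton l c ih =>
    have := Bool.toNat_le c
    simp only [Set.mem_Ico, heapIdx_append_singleton, List.length_append,
      List.length_singleton, pow_succ] at ih ⊢
    omega

lemma log2_heapIdx (l : List Bool) : Nat.log2 (heapIdx l) = l.length := by
  rw [Nat.log2_eq_log_two]
  exact Nat.log_eq_of_pow_le_of_lt_pow (heapIdx_mem_Ico l).1 (heapIdx_mem_Ico l).2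

lemma exists_heapIdx_eq {N : ℕ} (hN : 1 ≤ N) : ∃ l, heapIdx l = N := by
  induction N using Nat.strong_induction_on with
  | _ N ih =>
    rcases Nat.lt_or_ge N 2 with hN2 | hN2
    · exact ⟨[], by rw [heapIdx, List.foldl_nil]; omega⟩
    · obtain ⟨l, hl⟩ := ih (N / 2) (by omega) (by omega)
      refine ⟨l ++ [decide (N % 2 = 1)], ?_⟩
      rw [heapIdx_append_singleton, hl]
      rcases Nat.mod_two_eq_zero_or_one N with h | h <;>
        simp only [h, zero_ne_one, decide_false, decide_true, Bool.toNat_false, Bool.toNat_true] <;>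
        omega

lemma sub_childSub_heapIdx {n : ℕ} (g : HeapTree n) (b : Bool)
    {l : List Bool} (hl : l.length < n) :
    sub (childSub g b) (heapIdx l) = sub g (heapIdx (b :: l)) := by
  have hl' : 2 ^ (l.length + 1) ≤ 2 ^ n := Nat.pow_le_pow_right (by norm_num) hl
  have hmem := heapIdx_mem_Ico l
  have hpos : 1 ≤ 2 ^ l.length := Nat.one_le_two_pow
  simp only [Set.mem_Ico] at hmem
  have hlt : heapIdx l - 1 < 2 ^ (n + 1 - 1) - 1 := by rw [Nat.add_sub_cancel]; omega
  rw [sub, dif_pos hlt, childSub, heapIdx_cons, Nat.sub_add_cancel (by omega), log2_heapIdx]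

lemma heapTree_ext {k : ℕ} {g g' : HeapTree (k + 1)} (hroot : sub g 1 = sub g' 1)
    (hchild : ∀ b, childSub g b = childSub g' b) : g = g' := by
  funext h
  have hsub : ∀ g : HeapTree (k + 1), sub g (h.val + 1) = g h := fun g => by
    rw [sub, dif_pos (by simp)]
    rfl
  obtain ⟨l, hl⟩ := exists_heapIdx_eq (Nat.le_add_left 1 h.val)
  rw [← hsub g, ← hsub g', ← hl]
  cases l with
  | nil => exact hroot
  | cons b l =>
    have hmem := heapIdx_mem_Ico (b :: l)
    have hlen : l.length < k + 1 := by
      have : 2 ^ (l.length + 1) < 2 ^ (k + 1 + 1) := by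
        simp only [Set.mem_Ico, List.length_cons] at hmem
        have := h.isLt
        omega
      exact Nat.succ_lt_succ_iff.mp ((Nat.pow_lt_pow_iff_right (by norm_num)).mp this)
    rw [← sub_childSub_heapIdx g b hlen, ← sub_childSub_heapIdx g' b hlen, hchild]

lemma card_heapTree (d : ℕ) : Fintype.card (HeapTree d) = 2 ^ (2 ^ (d + 1) - 1) := by
  simp

noncomputable def heapTreeEquiv (k : ℕ) : HeapTree (k + 1) ≃ Bool × HeapTree k × HeapTree k :=
  Equiv.ofBijective (fun g => (sub g 1, childSub g false, childSub g true)) <| by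
    refine (Fintype.bijective_iff_injective_and_card _).mpr ⟨fun g g' h => ?_, ?_⟩
    · simp only [Prod.mk.injEq] at h
      exact heapTree_ext h.1 fun b => by cases b <;> simp [h.2.1, h.2.2]
    · have hexp : 2 ^ (k + 1 + 1) - 1 = 1 + (2 ^ (k + 1) - 1 + (2 ^ (k + 1) - 1)) := by
        have := Nat.one_le_two_pow (n := k + 1)
        rw [pow_succ]
        omega
      rw [Fintype.card_prod, Fintype.card_prod, Fintype.card_bool, card_heapTree, card_heapTree,
        hexp, pow_add, pow_add, pow_one]

lemma card_heapTree_succ (k : ℕ) :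
    Fintype.card (HeapTree (k + 1)) = 2 * Fintype.card (HeapTree k) ^ 2 := by
  rw [Fintype.card_congr (heapTreeEquiv k), Fintype.card_prod, Fintype.card_prod,
    Fintype.card_bool, sq]

lemma heapTreeEquiv_apply {k : ℕ} (g : HeapTree (k + 1)) :
    heapTreeEquiv k g = (sub g 1, childSub g false, childSub g true) :=
  rfl

lemma heapTreeEquiv_symm_spec {k : ℕ} (b : Bool) (u v : HeapTree k) :
    sub ((heapTreeEquiv k).symm (b, u, v)) 1 = b ∧
      childSub ((heapTreeEquiv k).symm (b, u, v)) false = u ∧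
      childSub ((heapTreeEquiv k).symm (b, u, v)) true = v := by
  simpa only [heapTreeEquiv_apply, Prod.mk.injEq] using
    (heapTreeEquiv k).apply_symm_apply (b, u, v)

noncomputable def forestFiberEquiv {ι : Type*} {k : ℕ} (s : ι → Bool) :
    {F : ι → HeapTree (k + 1) // ∀ j, sub (F j) 1 = s j} ≃ (ι × Bool → HeapTree k) where
  toFun F jc := childSub (F.1 jc.1) jc.2
  invFun c := ⟨fun j => (heapTreeEquiv k).symm (s j, c (j, false), c (j, true)),
    fun j => (heapTreeEquiv_symm_spec _ _ _).1⟩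
  left_inv F := Subtype.ext <| funext fun j => by
    simp only [Equiv.symm_apply_eq, heapTreeEquiv_apply, F.2 j]
  right_inv c := funext fun ⟨j, b⟩ => by
    cases b
    · exact (heapTreeEquiv_symm_spec _ _ _).2.1
    · exact (heapTreeEquiv_symm_spec _ _ _).2.2

lemma pathLabels_cons {n : ℕ} (g : HeapTree n) (b : Bool) (q : List Bool) :
    pathLabels (n + 1) g (b :: q) = sub g 1 :: pathLabels n (childSub g b) q := by
  rw [pathLabels, List.range_succ_eq_map, List.map_cons, List.map_map, pathLabels]
  refine congrArg₂ _ rfl (List.map_congr_left fun j hj => ?_)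
  have hj : (q.take j).length < n := by
    have := List.length_take_le j q
    rw [List.mem_range] at hj
    omega
  exact (sub_childSub_heapIdx g b hj).symm

lemma sup_ofFn_succ {β : Type*} [SemilatticeSup β] [OrderBot β] (n : ℕ)
    (f : List Bool → β) :
    univ.sup (fun t : Fin (n + 1) → Bool => f (List.ofFn t)) =
      (univ.sup fun ts : Fin n → Bool => f (false :: List.ofFn ts)) ⊔
        univ.sup fun ts : Fin n → Bool => f (true :: List.ofFn ts) := by
  rw [← map_univ_equiv (Fin.consEquiv fun _ => Bool), sup_map, ← univ_product_univ,
    sup_product_left, Fintype.univ_bool, sup_insert, sup_singleton, sup_comm]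
  simp [Fin.consEquiv, List.ofFn_succ]

def treeOcc {N : ℕ} (d : ℕ) (g : Fin N → Bool) (ts : List Bool) : ℕ :=
  ∑ p : Fin d → Bool, if pathLabels (d + 1) g (List.ofFn p) = ts then 1 else 0

def forestOcc {N : ℕ} {ι : Type*} [Fintype ι] (d : ℕ) (F : ι → Fin N → Bool)
    (ts : List Bool) : ℕ :=
  ∑ i, treeOcc d (F i) ts

def forestMax {N : ℕ} {ι : Type*} [Fintype ι] (d : ℕ) (F : ι → Fin N → Bool) : ℕ :=
  univ.sup fun ts : Fin (d + 1) → Bool => forestOcc d F (List.ofFn ts)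

lemma forestMax_comp_equiv {N : ℕ} {ι κ : Type*} [Fintype ι] [Fintype κ] (d : ℕ)
    (e : κ ≃ ι) (F : ι → Fin N → Bool) :
    forestMax d (F ∘ e) = forestMax d F := by
  simp only [forestMax, forestOcc, Function.comp_apply]
  congr! 2 with ts
  exact e.sum_comp fun i => treeOcc d (F i) (List.ofFn ts)

lemma Mval_eq_forestMax {m d : ℕ} (b : Bool) (F : Fin (2 * m) → HeapTree d) :
    Mval ((b, F) : Ω m (d + 1)) = forestMax d F := by
  have hocc : ∀ b' ts, occ ((b, F) : Ω m (d + 1)) (b' :: ts) =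
      if b = b' then forestOcc d F ts else 0 := fun _ _ => rfl
  rw [Mval, sup_ofFn_succ]
  simp only [hocc]
  cases b <;> simp [forestMax]

lemma treeOcc_cons {k : ℕ} (g : HeapTree (k + 1)) (t : Bool) (ts : List Bool) :
    treeOcc (k + 1) g (t :: ts) =
      if sub g 1 = t then ∑ b, treeOcc k (childSub g b) ts else 0 := by
  rw [treeOcc, ← (Fin.consEquiv fun _ => Bool).sum_comp, Fintype.sum_prod_type]
  simp only [Fin.consEquiv, Equiv.coe_fn_mk, List.ofFn_succ, Fin.cons_zero, Fin.cons_succ]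
  split_ifs with h
  · simp [treeOcc, pathLabels_cons, h]
  · simp [pathLabels_cons, h]

def childForest {ι : Type*} {k : ℕ} (F : ι → HeapTree (k + 1)) (p : ι → Prop)
    (jc : {jc : ι × Bool // p jc.1}) : HeapTree k :=
  childSub (F jc.1.1) jc.1.2

lemma forestOcc_cons {ι : Type*} [Fintype ι] {k : ℕ} {F : ι → HeapTree (k + 1)}
    {p : ι → Prop} [DecidablePred p] {t : Bool} (hp : ∀ j, sub (F j) 1 = t ↔ p j)
    (ts : List Bool) :
    forestOcc (k + 1) F (t :: ts) = forestOcc k (childForest F p) ts := by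
  simp only [forestOcc, treeOcc_cons, hp, childForest]
  rw [← sum_subtype (univ.filter fun jc : ι × Bool => p jc.1) (by simp)
    (fun jc => treeOcc k (childSub (F jc.1) jc.2) ts), sum_filter, Fintype.sum_prod_type]
  refine sum_congr rfl fun j _ => ?_
  split_ifs <;> simp

lemma forestMax_succ {ι : Type*} [Fintype ι] {k : ℕ} {F : ι → HeapTree (k + 1)}
    {p : ι → Prop} [DecidablePred p] (hp : ∀ j, sub (F j) 1 = true ↔ p j) :
    forestMax (k + 1) F =
      max (forestMax k (childForest F fun j => ¬ p j)) (forestMax k (childForest F p)) := by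
  have hp' : ∀ j, sub (F j) 1 = false ↔ ¬ p j := by simp [← hp]
  simp only [forestMax, sup_ofFn_succ, forestOcc_cons hp, forestOcc_cons hp']

lemma card_subtype_restrict_and {α T : Type*} [Fintype α] [DecidableEq α] [Fintype T]
    (p : α → Prop) [DecidablePred p] (P : (Subtype p → T) → Prop)
    (Q : ({a // ¬ p a} → T) → Prop) [DecidablePred P] [DecidablePred Q] :
    Fintype.card {c : α → T // P (fun a => c a) ∧ Q (fun a => c a)} =
      Fintype.card {u // P u} * Fintype.card {v // Q v} := by
  rw [← Fintype.card_prod]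
  exact Fintype.card_congr <|
    ((Equiv.piEquivPiSubtypeProd p fun _ => T).subtypeEquiv fun _ => Iff.rfl).trans
      Equiv.subtypeProdEquivProd

def numForestsMaxLt (d x : ℕ) (ι : Type*) [Fintype ι] [DecidableEq ι] : ℕ :=
  Fintype.card {F : ι → HeapTree d // forestMax d F < x}

lemma numForestsMaxLt_congr {d x : ℕ} {ι κ : Type*} [Fintype ι] [DecidableEq ι] [Fintype κ]
    [DecidableEq κ] (e : ι ≃ κ) : numForestsMaxLt d x ι = numForestsMaxLt d x κ :=
  Fintype.card_congr <| (e.arrowCongr (Equiv.refl _)).subtypeEquiv fun F => by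
    change _ ↔ forestMax d (F ∘ e.symm) < x
    rw [forestMax_comp_equiv]

lemma numForestsMaxLt_succ (k x : ℕ) (ι : Type*) [Fintype ι] [DecidableEq ι] :
    numForestsMaxLt (k + 1) x ι = ∑ s : ι → Bool,
      numForestsMaxLt k x {jc : ι × Bool // s jc.1 = true} *
        numForestsMaxLt k x {jc : ι × Bool // ¬ s jc.1 = true} := by
  rw [numForestsMaxLt, Fintype.card_subtype, card_eq_sum_card_fiberwise
    (f := fun F j => sub (F j) 1) (t := univ) fun _ _ => mem_univ _]
  refine sum_congr rfl fun s _ => ?_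
  rw [filter_filter, ← Fintype.card_subtype]
  refine (Fintype.card_congr ?_).trans <|
    card_subtype_restrict_and (fun jc : ι × Bool => s jc.1 = true)
      (fun u : {jc : ι × Bool // s jc.1 = true} → HeapTree k => forestMax k u < x)
      (fun v => forestMax k v < x)
  refine (Equiv.subtypeEquivRight fun F => ?_).trans <|
      (Equiv.subtypeSubtypeEquivSubtypeInter _ fun F => forestMax (k + 1) F < x).symm.trans <|
        (forestFiberEquiv s).subtypeEquiv fun F => ?_
  · exact (and_comm.trans (and_congr_left' funext_iff))
  · rw [forestMax_succ (p := fun j => s j = true) fun j => by rw [F.2 j], max_lt_iff, and_comm]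
    rfl

lemma sum_fun_bool_eq_sum_choose {ι M : Type*} [Fintype ι] [DecidableEq ι] [AddCommMonoid M]
    (f : ℕ → M) :
    ∑ s : ι → Bool, f (univ.filter fun j => s j = true).card =
      ∑ i ∈ range (Fintype.card ι + 1), (Fintype.card ι).choose i • f i := by
  rw [← card_univ, ← sum_powerset_apply_card]
  exact sum_nbij' (fun s => univ.filter fun j => s j = true) (fun A j => decide (j ∈ A))
    (by simp) (by simp) (fun s _ => funext fun j => by simp) (fun A _ => by ext; simp)
    fun _ _ => rfl

lemma numForestsMaxLt_subtype_fst (d x : ℕ) {ι : Type*} [Fintype ι] [DecidableEq ι]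
    (p : ι → Prop) [DecidablePred p] :
    numForestsMaxLt d x {jc : ι × Bool // p jc.1} =
      numForestsMaxLt d x (Fin (2 * Fintype.card {j // p j})) :=
  numForestsMaxLt_congr <| Fintype.equivFinOfCardEq <| by
    rw [Fintype.card_congr Equiv.prodSubtypeFstEquivSubtypeProd, Fintype.card_prod,
      Fintype.card_bool, mul_comm]

lemma numForestsMaxLt_succ_fin (k x n : ℕ) :
    numForestsMaxLt (k + 1) x (Fin n) = ∑ i ∈ range (n + 1), n.choose i *
      (numForestsMaxLt k x (Fin (2 * i)) * numForestsMaxLt k x (Fin (2 * (n - i)))) := by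
  rw [numForestsMaxLt_succ]
  refine (sum_congr rfl fun s _ => ?_).trans ((sum_fun_bool_eq_sum_choose fun i =>
    numForestsMaxLt k x (Fin (2 * i)) * numForestsMaxLt k x (Fin (2 * (n - i)))).trans ?_)
  · rw [numForestsMaxLt_subtype_fst k x (s · = true),
      numForestsMaxLt_subtype_fst k x (¬ s · = true), Fintype.card_subtype_compl,
      Fintype.card_subtype, Fintype.card_fin]
  · simp only [Fintype.card_fin, smul_eq_mul]

lemma pr_Mval_lt (m d x : ℕ) :
    Pr m (d + 1) (fun ℓ => Mval ℓ < x) =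
      numForestsMaxLt d x (Fin (2 * m)) / (Fintype.card (HeapTree d) : ℚ) ^ (2 * m) := by
  have hfilter : (univ.filter fun ℓ : Ω m (d + 1) => Mval ℓ < x) =
      univ ×ˢ univ.filter fun F : Fin (2 * m) → HeapTree d => forestMax d F < x := by
    ext ⟨b, F⟩
    simp [Mval_eq_forestMax]
  rw [Pr, hfilter, card_product, numForestsMaxLt, Fintype.card_subtype, Fintype.card_prod,
    Fintype.card_fun, card_univ, Fintype.card_bool, Fintype.card_fin]
  push_cast
  rw [mul_div_mul_left _ _ two_ne_zero]

theorem pr_mval_lt_rec_general (m n : ℕ) (hn : 2 ≤ n) (x : ℕ) :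
    Pr m n (fun ℓ => Mval ℓ < x) =
      ∑ i ∈ Finset.range (2 * m + 1),
        ((Nat.choose (2 * m) i : ℚ) / 2 ^ (2 * m)) *
          Pr i (n - 1) (fun ℓ => Mval ℓ < x) *
          Pr (2 * m - i) (n - 1) (fun ℓ => Mval ℓ < x) := by
  obtain ⟨k, rfl⟩ : ∃ k, n = k + 1 + 1 := ⟨n - 2, by omega⟩
  have hcard : (Fintype.card (HeapTree k) : ℚ) ≠ 0 := Nat.cast_ne_zero.mpr Fintype.card_ne_zero
  simp only [Nat.add_one_sub_one, pr_Mval_lt, card_heapTree_succ, numForestsMaxLt_succ_fin,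
    Nat.cast_sum, sum_div]
  refine sum_congr rfl fun i hi => ?_
  have hsplit : 2 * (2 * m) = 2 * i + 2 * (2 * m - i) := by
    have := mem_range.mp hi
    omega
  push_cast
  rw [mul_pow, ← pow_mul, hsplit, pow_add]
  field_simp

/-- let `n ≥ 2` and `m ≥ 1`, and consider the uniform
distribution over `{0,1}`-labelings of `T^m_n` (and, on the right-hand
side, of `T^i_{n-1}` and `T^{2m-i}_{n-1}`).  Then for every integer `x`:
`Pr(M^m_n < x) = ∑_{i=0}^{2m} (C(2m, i) / 2^{2m}) · Pr(M^i_{n-1} < x) ·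
Pr(M^{2m-i}_{n-1} < x)` (here `Pr(M^0_{n-1} < x)` is the probability that
the trivial maximum `0` of `T^0_{n-1}` is `< x`, which equals `1` for
`x ≥ 1`, matching the convention). -/
theorem pr_mval_lt_rec (m n : ℕ) (hn : 2 ≤ n) (hm : 1 ≤ m) (x : ℕ) :
    Pr m n (fun ℓ => Mval ℓ < x) =
      ∑ i ∈ Finset.range (2 * m + 1),
        ((Nat.choose (2 * m) i : ℚ) / 2 ^ (2 * m)) *
          Pr i (n - 1) (fun ℓ => Mval ℓ < x) *
          Pr (2 * m - i) (n - 1) (fun ℓ => Mval ℓ < x) :=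
  pr_mval_lt_rec_general m n hn x

end TreeDB
end
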